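/- Let h be a threshold function that is (nonstrictly) increasing and satisfies h(ℓ) ≤ ℓ for all ℓ ≥ 1. Let χ and χ̄ be child distributions such that both systems (χ,h) and (χ̄,h) are m-concordant and have maximum threshold at most m. Assume χ has finite support, that tier_{χ,h}(k) is nonempty for each k ∈ {1,…,m}, that χ̄(ℓ) = 0 for every ℓ ≥ 1 with χ(ℓ) = 0, and that for each k ∈ {1,…,m} there is a scalar α_k with χ̄(p) = α_k·χ(p) for every p ∈ tier_{χ,h}(k). Then χ = χ̄. -/

import Mathlib

/-- `B≥_{n,k}(x) = Σ_{j=k}^{n} C(n,j)·x^j·(1−x)^{n−j}`. -/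
noncomputable def Bge (n k : ℕ) (x : ℝ) : ℝ :=
  ∑ j ∈ Finset.Icc k n, (n.choose j : ℝ) * x ^ j * (1 - x) ^ (n - j)

/-- A child distribution: nonnegative, summable, total mass one. -/
def IsChildDist (χ : ℕ → ℝ) : Prop :=
  (∀ n, 0 ≤ χ n) ∧ Summable χ ∧ (∑' n, χ n) = 1

/-- The automaton distribution map of a recursive tree system `(χ, h)`. -/
noncomputable def Psi (χ : ℕ → ℝ) (h : ℕ → ℕ) (x : ℝ) : ℝ :=
  ∑' n, χ n * Bge n (h n) x

/-- `Ψ` is `m`-concordant: the first `m` derivatives of `Ψ` at `0` (within `[0,1]`)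
match those of the identity, i.e. `Ψ'(0) = 1` and `Ψ^{(k)}(0) = 0` for `2 ≤ k ≤ m`.
(For `m = 0` the condition is vacuous.) -/
def Concordant (m : ℕ) (Ψ : ℝ → ℝ) : Prop :=
  (1 ≤ m → iteratedDerivWithin 1 Ψ (Set.Icc (0 : ℝ) 1) 0 = 1) ∧
  ∀ k, 2 ≤ k → k ≤ m → iteratedDerivWithin k Ψ (Set.Icc (0 : ℝ) 1) 0 = 0

open Polynomial Finset

/-!
On a finitely supported `χ`, `Ψ` is a polynomial whose `k`-th coefficient is
`k! ⁻¹ Ψ^{(k)}(0)`, so concordance fixes the coefficients of degree `1, …, m` of both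
polynomials. Since `B≥_{n,j}` has no monomials below `x^j` and coefficient `C(n,j)` at `x^j`,
the `k`-th coefficient only sees the tiers `h(n) ≤ k`. By induction on `k`, once the lower
tiers of `χ` and `χ̄` agree, the `k`-th coefficients differ by `(α_k - 1) Σ_{h(n)=k} χ(n) C(n,k)`,
and this sum is positive because the tier is nonempty and `h(n) ≤ n`; hence `α_k = 1`.
Every `χ(n) > 0` lies in some tier `k ≤ m`, and `χ(0) = χ̄(0)` follows from the total mass.
-/

noncomputable def bgePoly (n k : ℕ) : ℝ[X] :=
  ∑ j ∈ Icc k n, C (n.choose j : ℝ) * (1 - X) ^ (n - j) * X ^ j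

lemma eval_bgePoly (n k : ℕ) (x : ℝ) : (bgePoly n k).eval x = Bge n k x := by
  simp only [bgePoly, Bge, eval_finsetSum, eval_mul, eval_pow, eval_C, eval_sub, eval_one, eval_X]
  exact sum_congr rfl fun j _ => by ring

lemma Bge_of_lt {n k : ℕ} (hnk : n < k) (x : ℝ) : Bge n k x = 0 := by
  rw [Bge, Icc_eq_empty (by omega), sum_empty]

lemma coeff_bgePoly_of_lt {n k j : ℕ} (hj : j < k) : (bgePoly n k).coeff j = 0 := by
  rw [bgePoly, finsetSum_coeff]
  refine sum_eq_zero fun i hi => ?_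
  rw [coeff_mul_X_pow', if_neg]
  have := (mem_Icc.1 hi).1
  omega

lemma coeff_bgePoly_self (n k : ℕ) : (bgePoly n k).coeff k = n.choose k := by
  by_cases hkn : k ≤ n
  · rw [bgePoly, finsetSum_coeff, sum_eq_single k]
    · simp [coeff_mul_X_pow', coeff_zero_eq_eval_zero]
    · intro i hi hik
      rw [coeff_mul_X_pow', if_neg]
      have := (mem_Icc.1 hi).1
      omega
    · exact fun hk => absurd (mem_Icc.2 ⟨le_rfl, hkn⟩) hk
  · rw [bgePoly, Icc_eq_empty hkn, sum_empty, coeff_zero, Nat.choose_eq_zero_of_lt (by omega),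
      Nat.cast_zero]

lemma iteratedDerivWithin_eval {s : Set ℝ} (hs : UniqueDiffOn ℝ s) (p : ℝ[X]) (k : ℕ) :
    ∀ x ∈ s, iteratedDerivWithin k (fun y => p.eval y) s x = (derivative^[k] p).eval x := by
  induction k with
  | zero => simp
  | succ k ih =>
    intro x hx
    rw [iteratedDerivWithin_succ, derivWithin_congr ih (ih x hx),
      Polynomial.derivWithin _ (hs x hx), Function.iterate_succ_apply']

lemma iteratedDerivWithin_eval_zero (p : ℝ[X]) (k : ℕ) :
    iteratedDerivWithin k (fun y => p.eval y) (Set.Icc 0 1) 0 = k.factorial * p.coeff k := by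
  rw [iteratedDerivWithin_eval (uniqueDiffOn_Icc zero_lt_one) p k 0 (by simp),
    ← coeff_zero_eq_eval_zero, coeff_iterate_derivative, zero_add, Nat.descFactorial_self,
    nsmul_eq_mul]

lemma coeff_eq_of_concordant {m k : ℕ} {p q : ℝ[X]} (hp : Concordant m fun x => p.eval x)
    (hq : Concordant m fun x => q.eval x) (hk : 1 ≤ k) (hkm : k ≤ m) :
    p.coeff k = q.coeff k := by
  have hderiv : iteratedDerivWithin k (fun x => p.eval x) (Set.Icc 0 1) 0 =
      iteratedDerivWithin k (fun x => q.eval x) (Set.Icc 0 1) 0 := by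
    rcases hk.eq_or_lt with rfl | hk
    · rw [hp.1 hkm, hq.1 hkm]
    · rw [hp.2 k hk hkm, hq.2 k hk hkm]
  rw [iteratedDerivWithin_eval_zero, iteratedDerivWithin_eval_zero] at hderiv
  exact mul_left_cancel₀ (Nat.cast_ne_zero.2 k.factorial_ne_zero) hderiv

noncomputable def psiPoly (χ : ℕ → ℝ) (h : ℕ → ℕ) (s : Finset ℕ) : ℝ[X] :=
  ∑ n ∈ s, C (χ n) * bgePoly n (h n)

lemma psiPoly_sub (χ χ' : ℕ → ℝ) (h : ℕ → ℕ) (s : Finset ℕ) :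
    psiPoly (χ - χ') h s = psiPoly χ h s - psiPoly χ' h s := by
  simp only [psiPoly, Pi.sub_apply, C_sub, sub_mul, sum_sub_distrib]

lemma Psi_eq_eval_psiPoly {χ : ℕ → ℝ} {h : ℕ → ℕ} {N : ℕ} (hh : 1 ≤ h 0)
    (hN : ∀ n, N < n → χ n = 0) : Psi χ h = fun x => (psiPoly χ h (Icc 1 N)).eval x := by
  funext x
  have hvanish : ∀ n ∉ Icc 1 N, χ n * Bge n (h n) x = 0 := by
    intro n hn
    rcases Nat.eq_zero_or_pos n with rfl | hn0
    · rw [Bge_of_lt (by omega), mul_zero]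
    · rw [hN n (by simp only [mem_Icc, not_and_or] at hn; omega), zero_mul]
  simp only [Psi, tsum_eq_sum hvanish, psiPoly, eval_finsetSum, eval_mul, eval_C, eval_bgePoly]

lemma coeff_psiPoly_of_forall_lt {χ : ℕ → ℝ} {h : ℕ → ℕ} {s : Finset ℕ} {k : ℕ}
    (hlow : ∀ n ∈ s, h n < k → χ n = 0) :
    (psiPoly χ h s).coeff k = ∑ n ∈ s with h n = k, χ n * n.choose k := by
  rw [psiPoly, finsetSum_coeff, sum_filter]
  refine sum_congr rfl fun n hn => ?_
  rw [coeff_C_mul]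
  rcases lt_trichotomy (h n) k with hlt | heq | hgt
  · rw [hlow n hn hlt, zero_mul, if_neg hlt.ne]
  · rw [if_pos heq, heq, coeff_bgePoly_self]
  · rw [coeff_bgePoly_of_lt hgt, mul_zero, if_neg hgt.ne']

lemma sum_tier_pos {χ : ℕ → ℝ} {h : ℕ → ℕ} {N k n : ℕ} (hχ : ∀ n, 0 ≤ χ n)
    (hN : ∀ n, N < n → χ n = 0) (hle : ∀ n, 1 ≤ n → h n ≤ n)
    (hn : 1 ≤ n) (hhn : h n = k) (hpos : 0 < χ n) :
    0 < ∑ n ∈ Icc 1 N with h n = k, χ n * n.choose k := by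
  have hnN : n ≤ N := by
    by_contra! hNn
    exact hpos.ne' (hN n hNn)
  have hchoose : (0 : ℝ) < n.choose k := Nat.cast_pos.2 (Nat.choose_pos (hhn ▸ hle n hn))
  refine (mul_pos hpos hchoose).trans_le (single_le_sum (f := fun n => χ n * n.choose k)
    (fun i _ => mul_nonneg (hχ i) (Nat.cast_nonneg _)) ?_)
  simp [hn, hnN, hhn]

lemma eq_of_coeff_psiPoly_eq {χ χbar : ℕ → ℝ} {h : ℕ → ℕ} {s : Finset ℕ} {m : ℕ}
    (hh : ∀ n, 1 ≤ h n)
    (hcoeff : ∀ k, 1 ≤ k → k ≤ m → (psiPoly χbar h s).coeff k = (psiPoly χ h s).coeff k)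
    (hS : ∀ k, 1 ≤ k → k ≤ m → 0 < ∑ n ∈ s with h n = k, χ n * n.choose k)
    (hscal : ∀ k, 1 ≤ k → k ≤ m → ∃ α : ℝ, ∀ n ∈ s, h n = k → χbar n = α * χ n) :
    ∀ n ∈ s, h n ≤ m → χbar n = χ n := by
  suffices htier : ∀ k, 1 ≤ k → k ≤ m → ∀ n ∈ s, h n = k → χbar n = χ n from
    fun n hn hnm => htier (h n) (hh n) hnm n hn rfl
  intro k
  induction k using Nat.strong_induction_on with
  | _ k ih =>
    intro hk hkm
    obtain ⟨α, hα⟩ := hscal k hk hkm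
    have hlow : ∀ n ∈ s, h n < k → (χbar - χ) n = 0 := fun n hn hlt =>
      sub_eq_zero.2 (ih (h n) hlt (hh n) (by omega) n hn rfl)
    have hdiff : (α - 1) * ∑ n ∈ s with h n = k, χ n * n.choose k = 0 := by
      rw [← sub_eq_zero.2 (hcoeff k hk hkm), ← coeff_sub, ← psiPoly_sub,
        coeff_psiPoly_of_forall_lt hlow, mul_sum]
      refine sum_congr rfl fun n hn => ?_
      rw [Pi.sub_apply, hα n (mem_filter.1 hn).1 (mem_filter.1 hn).2]
      ring
    have hα1 : α = 1 := sub_eq_zero.1 ((mul_eq_zero.1 hdiff).resolve_right (hS k hk hkm).ne')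
    intro n hn hhn
    rw [hα n hn hhn, hα1, one_mul]

lemma eq_of_tsum_eq_of_forall_pos {f g : ℕ → ℝ} (hf : Summable f) (hg : Summable g)
    (hsum : ∑' n, f n = ∑' n, g n) (hpos : ∀ n, 1 ≤ n → f n = g n) : f = g := by
  have htail : (fun n => f (n + 1)) = fun n => g (n + 1) := funext fun n => hpos _ n.succ_pos
  have h0 : f 0 = g 0 := by
    rwa [hf.tsum_eq_zero_add, hg.tsum_eq_zero_add, htail, add_left_inj] at hsum
  funext n
  rcases Nat.eq_zero_or_pos n with rfl | hn
  · exact h0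
  · exact hpos n hn

theorem stmt13_general (m : ℕ) (h : ℕ → ℕ) (hh : ∀ n, 1 ≤ h n)
    (hle : ∀ n, 1 ≤ n → h n ≤ n)
    (χ χbar : ℕ → ℝ) (hχ : IsChildDist χ) (hχbar : IsChildDist χbar)
    (hconc : Concordant m (Psi χ h)) (hconcbar : Concordant m (Psi χbar h))
    (hmax : ∀ n, 0 < χ n → h n ≤ m)
    (hfin : ∃ N, ∀ n, N < n → χ n = 0)
    (htier : ∀ k, 1 ≤ k → k ≤ m → ∃ n, 1 ≤ n ∧ h n = k ∧ 0 < χ n)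
    (hzero : ∀ n, 1 ≤ n → χ n = 0 → χbar n = 0)
    (hscal : ∀ k, 1 ≤ k → k ≤ m →
      ∃ α : ℝ, ∀ p, 1 ≤ p → h p = k → 0 < χ p → χbar p = α * χ p) :
    χ = χbar := by
  obtain ⟨N, hN⟩ := hfin
  have hNbar : ∀ n, N < n → χbar n = 0 := fun n hn => hzero n (by omega) (hN n hn)
  have hcoeff : ∀ k, 1 ≤ k → k ≤ m →
      (psiPoly χbar h (Icc 1 N)).coeff k = (psiPoly χ h (Icc 1 N)).coeff k :=
    fun k hk hkm => coeff_eq_of_concordant (Psi_eq_eval_psiPoly (hh 0) hNbar ▸ hconcbar)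
      (Psi_eq_eval_psiPoly (hh 0) hN ▸ hconc) hk hkm
  have hS : ∀ k, 1 ≤ k → k ≤ m → 0 < ∑ n ∈ Icc 1 N with h n = k, χ n * n.choose k := by
    intro k hk hkm
    obtain ⟨n, hn, hhn, hpos⟩ := htier k hk hkm
    exact sum_tier_pos hχ.1 hN hle hn hhn hpos
  have hscal' : ∀ k, 1 ≤ k → k ≤ m → ∃ α : ℝ, ∀ n ∈ Icc 1 N, h n = k → χbar n = α * χ n := by
    intro k hk hkm
    obtain ⟨α, hα⟩ := hscal k hk hkm
    refine ⟨α, fun n hn hhn => ?_⟩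
    have hn1 := (mem_Icc.1 hn).1
    rcases (hχ.1 n).eq_or_lt with h0 | hpos
    · rw [← h0, hzero n hn1 h0.symm, mul_zero]
    · exact hα n hn1 hhn hpos
  have hagree := eq_of_coeff_psiPoly_eq hh hcoeff hS hscal'
  refine eq_of_tsum_eq_of_forall_pos hχ.2.1 hχbar.2.1 (hχ.2.2.trans hχbar.2.2.symm) fun n hn => ?_
  rcases (hχ.1 n).eq_or_lt with h0 | hpos
  · rw [← h0, hzero n hn h0.symm]
  · have hnN : n ≤ N := by
      by_contra! hNn
      exact hpos.ne' (hN n hNn)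
    exact (hagree n (mem_Icc.2 ⟨hn, hnN⟩) (hmax n hpos)).symm

theorem stmt13 (m : ℕ) (hm : 1 ≤ m) (h : ℕ → ℕ) (hh : ∀ n, 1 ≤ h n)
    (hmono : Monotone h) (hle : ∀ n, 1 ≤ n → h n ≤ n)
    (χ χbar : ℕ → ℝ) (hχ : IsChildDist χ) (hχbar : IsChildDist χbar)
    (hconc : Concordant m (Psi χ h)) (hconcbar : Concordant m (Psi χbar h))
    (hmax : ∀ n, 0 < χ n → h n ≤ m) (hmaxbar : ∀ n, 0 < χbar n → h n ≤ m)
    (hfin : ∃ N, ∀ n, N < n → χ n = 0)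
    (htier : ∀ k, 1 ≤ k → k ≤ m → ∃ n, 1 ≤ n ∧ h n = k ∧ 0 < χ n)
    (hzero : ∀ n, 1 ≤ n → χ n = 0 → χbar n = 0)
    (hscal : ∀ k, 1 ≤ k → k ≤ m →
      ∃ α : ℝ, ∀ p, 1 ≤ p → h p = k → 0 < χ p → χbar p = α * χ p) :
    χ = χbar :=
  stmt13_general m h hh hle χ χbar hχ hχbar hconc hconcbar hmax hfin htier hzero hscal
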